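/- Let U and V be nonempty convex subsets of a separated locally convex space X. If qri(U) ∩ V ≠ ∅ and 0 ∈ qi(U - U), then 0 ∈ qi(U - V). -/

import Mathlib

open Set Pointwise Topology

/-- The conic hull: cone(S) = ⋃_{t ≥ 0} t • S. -/
def coneHull {E : Type*} [AddCommGroup E] [Module ℝ E] (S : Set E) : Set E :=
  {x | ∃ t : ℝ, 0 ≤ t ∧ ∃ s ∈ S, x = t • s}

/-- The quasi-relative interior. -/
def qri {E : Type*} [AddCommGroup E] [Module ℝ E] [TopologicalSpace E] (U : Set E) : Set E :=
  {x | x ∈ U ∧ ∃ M : Submodule ℝ E, closure (coneHull (U - {x})) = (M : Set E)}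

/-- The quasi interior. -/
def qi {E : Type*} [AddCommGroup E] [Module ℝ E] [TopologicalSpace E] (U : Set E) : Set E :=
  {x | x ∈ U ∧ closure (coneHull (U - {x})) = Set.univ}

/-- The algebraic interior (core). -/
def algCore {E : Type*} [AddCommGroup E] [Module ℝ E] (U : Set E) : Set E :=
  {x | x ∈ U ∧ coneHull (U - {x}) = Set.univ}

/-- The relative algebraic interior (intrinsic core). -/
def icr {E : Type*} [AddCommGroup E] [Module ℝ E] (U : Set E) : Set E :=
  {x | x ∈ U ∧ ∃ M : Submodule ℝ E, coneHull (U - {x}) = (M : Set E)}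

/-- The strong quasi-relative interior. -/
def sqri {E : Type*} [AddCommGroup E] [Module ℝ E] [TopologicalSpace E] (U : Set E) : Set E :=
  {x | x ∈ U ∧ ∃ M : Submodule ℝ E, coneHull (U - {x}) = (M : Set E) ∧ IsClosed (M : Set E)}

/-- The normal cone of U at x. -/
def normalCone {E : Type*} [AddCommGroup E] [Module ℝ E] [TopologicalSpace E]
    (U : Set E) (x : E) : Set (E →L[ℝ] ℝ) :=
  {f | ∀ y ∈ U, f (y - x) ≤ 0}

/-!
For `x ∈ qri U ∩ V`, the closed subspace `closure (cone (U - x))` contains `U - x`, hence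
`U - U`, hence the closure of `cone (U - U)`, which is all of `X`; so `x ∈ qi U`. Since
`U - x ⊆ (U - V) - (x - x)`, this density passes to `U - V` at the point `x - x = 0`.
-/

section ConeHull

variable {E : Type*} [AddCommGroup E] [Module ℝ E]

theorem coneHull_mono {A B : Set E} (h : A ⊆ B) : coneHull A ⊆ coneHull B := by
  rintro _ ⟨t, ht, s, hs, rfl⟩
  exact ⟨t, ht, s, h hs, rfl⟩

theorem subset_coneHull (S : Set E) : S ⊆ coneHull S :=
  fun s hs => ⟨1, zero_le_one, s, hs, (one_smul ℝ s).symm⟩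

theorem coneHull_subset_submodule {S : Set E} {M : Submodule ℝ E} (h : S ⊆ M) :
    coneHull S ⊆ M := by
  rintro _ ⟨t, -, s, hs, rfl⟩
  exact M.smul_mem t (h hs)

theorem sub_subset_submodule_of_sub_singleton_subset {U : Set E} {x : E} {M : Submodule ℝ E}
    (h : U - {x} ⊆ M) : U - U ⊆ M := by
  rintro _ ⟨a, ha, b, hb, rfl⟩
  have hab := M.sub_mem (h (sub_mem_sub ha rfl)) (h (sub_mem_sub hb rfl))
  rwa [sub_sub_sub_cancel_right] at hab

end ConeHull

section QuasiInterior

variable {E : Type*} [AddCommGroup E] [Module ℝ E] [TopologicalSpace E]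

theorem zero_mem_qi_iff {S : Set E} : (0 : E) ∈ qi S ↔ 0 ∈ S ∧ closure (coneHull S) = univ := by
  rw [qi, mem_ofPred_eq, singleton_zero, sub_zero]

theorem mem_qi_of_mem_qri {U : Set E} {x : E} (hx : x ∈ qri U) (hUU : (0 : E) ∈ qi (U - U)) :
    x ∈ qi U := by
  obtain ⟨hxU, M, hM⟩ := hx
  have hM_closed : IsClosed (M : Set E) := hM ▸ isClosed_closure
  have hUx : U - {x} ⊆ M := hM ▸ (subset_coneHull _).trans subset_closure
  have hcone : closure (coneHull (U - U)) ⊆ M :=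
    hM_closed.closure_subset_iff.mpr
      (coneHull_subset_submodule (sub_subset_submodule_of_sub_singleton_subset hUx))
  refine ⟨hxU, hM.trans (eq_univ_of_univ_subset ?_)⟩
  rwa [(zero_mem_qi_iff.mp hUU).2] at hcone

theorem sub_mem_qi_sub {U V : Set E} {x y : E} (hx : x ∈ qi U) (hy : y ∈ V) :
    x - y ∈ qi (U - V) := by
  refine ⟨sub_mem_sub hx.1 hy, eq_univ_of_univ_subset ?_⟩
  have hsub : U - {x} ⊆ U - V - {x - y} := by
    rw [sub_singleton]
    rintro _ ⟨u, hu, rfl⟩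
    exact ⟨u - y, sub_mem_sub hu hy, x - y, rfl, sub_sub_sub_cancel_right u x y⟩
  exact hx.2 ▸ closure_mono (coneHull_mono hsub)

end QuasiInterior

theorem zero_mem_qi_sub_of_qri_inter_general
    {X : Type*} [AddCommGroup X] [Module ℝ X] [TopologicalSpace X]
    (U V : Set X)
    (h1 : (qri U ∩ V).Nonempty) (h2 : (0 : X) ∈ qi (U - U)) :
    (0 : X) ∈ qi (U - V) := by
  obtain ⟨x, hx_qri, hxV⟩ := h1
  simpa using sub_mem_qi_sub (mem_qi_of_mem_qri hx_qri h2) hxV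

theorem zero_mem_qi_sub_of_qri_inter
    {X : Type*} [AddCommGroup X] [Module ℝ X] [TopologicalSpace X]
    [IsTopologicalAddGroup X] [ContinuousSMul ℝ X] [LocallyConvexSpace ℝ X] [T2Space X]
    (U V : Set X) (hUne : U.Nonempty) (hVne : V.Nonempty)
    (hUconv : Convex ℝ U) (hVconv : Convex ℝ V)
    (h1 : (qri U ∩ V).Nonempty) (h2 : (0 : X) ∈ qi (U - U)) :
    (0 : X) ∈ qi (U - V) :=
  zero_mem_qi_sub_of_qri_inter_general U V h1 h2
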